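/- Let N, d be positive integers and let U be a unitary matrix indexed by Fin N × Fin d. Then the Environment Right-Action Algebra A_r(U) is commutative (∀ a b ∈ A_r(U), a*b = b*a) if and only if there exist orthonormal bases (φ_i)_{i ∈ Fin d} and (ψ_i)_{i ∈ Fin d} of ℂ^d and unitary matrices U₁, …, U_d : Matrix (Fin N) (Fin N) ℂ such that U = ∑_{i=1}^{d} U_i ⊗ |φ_i⟩⟨ψ_i|, where |φ⟩⟨ψ| denotes the rank-one matrix with entries (|φ⟩⟨ψ|) k l = φ k * conj (ψ l). -/

import Mathlib

open scoped Kronecker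
open Matrix

/-- The slice `M(f,g)` of an operator on `ℂ^N ⊗ ℂ^d`: the partial trace `Tr_{|g⟩⟨f|}[M]`,
given by `M(f,g) k l = ∑ i j, conj (f i) * g j * M (i,k) (j,l)`. -/
noncomputable def envSlice {N d : ℕ} (M : Matrix (Fin N × Fin d) (Fin N × Fin d) ℂ)
    (f g : Fin N → ℂ) : Matrix (Fin d) (Fin d) ℂ :=
  Matrix.of fun k l => ∑ i, ∑ j, (starRingEnd ℂ) (f i) * g j * M (i, k) (j, l)

/-- The Environment Algebra `A(U)`: the unital star-subalgebra generated by all slices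
`U(f,g)` and `Uᴴ(f,g)`. -/
noncomputable def envAlg {N d : ℕ} (U : Matrix (Fin N × Fin d) (Fin N × Fin d) ℂ) :
    StarSubalgebra ℂ (Matrix (Fin d) (Fin d) ℂ) :=
  StarAlgebra.adjoin ℂ
    ({A | ∃ f g, A = envSlice U f g} ∪ {A | ∃ f g, A = envSlice Uᴴ f g})

/-- The Environment Right-Action Algebra `A_r(U)`: the unital star-subalgebra generated by all
products `Uᴴ(f₁,g₁) * U(f₂,g₂)`. -/
noncomputable def envActAlg {N d : ℕ} (U : Matrix (Fin N × Fin d) (Fin N × Fin d) ℂ) :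
    StarSubalgebra ℂ (Matrix (Fin d) (Fin d) ℂ) :=
  StarAlgebra.adjoin ℂ
    {A | ∃ f₁ g₁ f₂ g₂, A = envSlice Uᴴ f₁ g₁ * envSlice U f₂ g₂}

/-!
If `U = ∑ₗ Uₗ ⊗ |φₗ⟩⟨ψₗ|`, every slice is `U(f,g) = ∑ₗ ⟨f, Uₗ g⟩ |φₗ⟩⟨ψₗ|`. Since
`Uᴴ(f,g) = U(g,f)ᴴ` and the `φₗ` are orthonormal, every generator `Uᴴ(f₁,g₁) U(f₂,g₂)` is of the
form `∑ₗ μₗ |ψₗ⟩⟨ψₗ|`; such matrices commute with each other and with their adjoints.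

Conversely, a commutative star-algebra of matrices has a common orthonormal eigenbasis `(ψₗ)`.
Let `B p q = U(eₚ, e_q)` be the blocks of `U`. The generators `(B p q)ᴴ B p' q'` are diagonal in
`(ψₗ)`, so the vectors `B p q ψₖ` and `B p' q' ψₗ` are orthogonal for `k ≠ l`, while `Uᴴ U = 1`
gives `∑_b ⟨B b p ψₗ, B b q ψₗ⟩ = δ_pq`, so for each `l` some `B p q ψₗ` is nonzero. `d` mutually
orthogonal nonzero subspaces of `ℂ^d` are lines `ℂ φₗ` for an orthonormal basis `(φₗ)`, so
`B p q ψₗ = (Uₗ)_pq φₗ`, and the same normalisation makes each `Uₗ` unitary.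
-/

open scoped InnerProductSpace ComplexConjugate ComplexStarModule
open Module WithLp

section LinearAlgebra

variable {𝕜 E : Type*} [RCLike 𝕜] [NormedAddCommGroup E] [InnerProductSpace 𝕜 E]
  [FiniteDimensional 𝕜 E]

theorem DirectSum.IsInternal.exists_orthonormalBasis_forall_exists_mem {ι κ : Type*}
    [DecidableEq ι] [Fintype κ] {V : ι → Submodule 𝕜 E} (hV : DirectSum.IsInternal V)
    (hV' : OrthogonalFamily 𝕜 (fun i => V i) fun i => (V i).subtypeₗᵢ)
    (hκ : finrank 𝕜 E = Fintype.card κ) :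
    ∃ b : OrthonormalBasis κ 𝕜 E, ∀ a, ∃ i, b a ∈ V i := by
  classical
  -- the subordinate basis needs a finite index; only finitely many `V i` are nonzero
  let := hV.submodule_iSupIndep.fintypeNeBotOfFiniteDimensional
  have hW : DirectSum.IsInternal fun i : {i // V i ≠ ⊥} => V i :=
    DirectSum.isInternal_ne_bot_iff.mpr hV
  have hW' : OrthogonalFamily 𝕜 (fun i : {i // V i ≠ ⊥} => V i) fun i => (V i).subtypeₗᵢ :=
    fun _ _ hij => hV' fun h => hij (Subtype.ext h)
  refine ⟨(hW.subordinateOrthonormalBasis hκ hW').reindex (Fintype.equivFin κ).symm,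
    fun a => ⟨_, by
      simpa using hW.subordinateOrthonormalBasis_subordinate hκ (Fintype.equivFin κ a) hW'⟩⟩

theorem exists_orthonormalBasis_forall_eq_inner_smul {ι κ : Type*} [Fintype ι] (v : ι → κ → E)
    (hcard : finrank 𝕜 E = Fintype.card ι)
    (horth : ∀ i j, i ≠ j → ∀ a c, ⟪v i a, v j c⟫_𝕜 = 0) (hne : ∀ i, ∃ a, v i a ≠ 0) :
    ∃ b : OrthonormalBasis ι 𝕜 E, ∀ i a, v i a = ⟪b i, v i a⟫_𝕜 • b i := by
  choose a ha using hne
  set w : ι → E := fun i => (‖v i (a i)‖ : 𝕜)⁻¹ • v i (a i) with hw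
  have hw_orth : ∀ i j, i ≠ j → ∀ c, ⟪w i, v j c⟫_𝕜 = 0 := fun i j hij c => by
    rw [hw, inner_smul_left, horth i j hij, mul_zero]
  have hon : Orthonormal 𝕜 w :=
    ⟨fun i => norm_smul_inv_norm (ha i), fun i j hij =>
      (inner_smul_right _ _ _).trans (by rw [hw_orth i j hij, mul_zero])⟩
  let b := OrthonormalBasis.mk hon
    (hon.linearIndependent.span_eq_top_of_card_eq_finrank' hcard.symm).ge
  refine ⟨b, fun i c => ?_⟩
  conv_lhs => rw [← b.sum_repr' (v i c)]
  refine Fintype.sum_eq_single i fun j hji => ?_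
  rw [OrthonormalBasis.coe_mk, hw_orth j i hji, zero_smul]

theorem OrthonormalBasis.sum_conj_mul_eq_ite {ι n : Type*} [Fintype ι] [DecidableEq ι] [Fintype n]
    (b : OrthonormalBasis ι 𝕜 (EuclideanSpace 𝕜 n)) (i j : ι) :
    ∑ k, conj (b i k) * b j k = if i = j then 1 else 0 := by
  rw [← orthonormal_iff_ite.mp b.orthonormal i j, EuclideanSpace.inner_eq_star_dotProduct,
    dotProduct]
  simp [mul_comm]

theorem OrthonormalBasis.sum_vecMulVec_eq_one {ι n : Type*} [Fintype ι] [Fintype n] [DecidableEq n]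
    (b : OrthonormalBasis ι 𝕜 (EuclideanSpace 𝕜 n)) :
    ∑ i, vecMulVec (ofLp (b i)) (star (ofLp (b i))) = 1 := by
  ext k m
  have h := congrArg (· k) (b.sum_repr' (EuclideanSpace.single m 1))
  simp only [EuclideanSpace.inner_single_right, one_mul, PiLp.single_apply] at h
  simpa [Matrix.sum_apply, vecMulVec_apply, Matrix.one_apply, mul_comm] using h

end LinearAlgebra

theorem StarSubalgebra.exists_orthonormalBasis_forall_eigenvector {n : Type*} [Fintype n]
    [DecidableEq n] (S : StarSubalgebra ℂ (Matrix n n ℂ))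
    (hS : ∀ a ∈ S, ∀ b ∈ S, a * b = b * a) :
    ∃ b : OrthonormalBasis n ℂ (EuclideanSpace ℂ n), ∀ a ∈ S, ∀ i, ∃ μ : ℂ,
      toEuclideanLin a (b i) = μ • b i := by
  classical
  let T : {a // a ∈ S ∧ IsSelfAdjoint a} → Module.End ℂ (EuclideanSpace ℂ n) :=
    fun a => toEuclideanLin a.1
  have hT : ∀ a, (T a).IsSymmetric := fun a => isSymmetric_toEuclideanLin_iff.mpr a.2.2
  have hC : Pairwise (Function.onFun Commute T) := fun a c _ => by
    simp only [Function.onFun, T, commute_iff_eq, Module.End.mul_eq_comp, ← toLpLin_mul_same,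
      hS _ a.2.1 _ c.2.1]
  obtain ⟨b, hb⟩ := (LinearMap.IsSymmetric.directSum_isInternal_of_pairwise_commute hT hC
    ).exists_orthonormalBasis_forall_exists_mem
      (LinearMap.IsSymmetric.orthogonalFamily_iInf_eigenspaces hT) finrank_euclideanSpace
  refine ⟨b, fun a ha i => ?_⟩
  obtain ⟨χ, hχ⟩ := hb i
  have hsa : ∀ c (hc : c ∈ S) (hc' : IsSelfAdjoint c),
      toEuclideanLin c (b i) = χ ⟨c, hc, hc'⟩ • b i := fun c hc hc' =>
    Module.End.mem_eigenspace_iff.mp ((Submodule.mem_iInf _).mp hχ ⟨c, hc, hc'⟩)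
  have hre : (ℜ a : Matrix n n ℂ) ∈ S := by
    rw [realPart_apply_coe, ← Complex.coe_smul]
    exact S.smul_mem (add_mem ha (star_mem ha)) _
  have him : (ℑ a : Matrix n n ℂ) ∈ S := by
    rw [imaginaryPart_apply_coe, ← Complex.coe_smul]
    exact S.smul_mem (S.smul_mem (sub_mem ha (star_mem ha)) _) _
  refine ⟨χ ⟨_, hre, (ℜ a).2⟩ + Complex.I * χ ⟨_, him, (ℑ a).2⟩, ?_⟩
  conv_lhs => rw [← realPart_add_I_smul_imaginaryPart a]
  rw [map_add, map_smul, LinearMap.add_apply, LinearMap.smul_apply, hsa _ hre (ℜ a).2,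
    hsa _ him (ℑ a).2, add_smul, smul_smul]

theorem Matrix.comp_symm_conjTranspose_mul_apply {ι κ R : Type*} [Fintype ι] [Fintype κ]
    [NonUnitalSemiring R] [StarRing R] (U : Matrix (ι × κ) (ι × κ) R) (p q : ι) :
    (comp ι ι κ κ R).symm (Uᴴ * U) p q =
      ∑ b, ((comp ι ι κ κ R).symm U b p)ᴴ * (comp ι ι κ κ R).symm U b q := by
  ext k l
  simp [Matrix.mul_apply, Matrix.sum_apply, Fintype.sum_prod_type]

theorem Matrix.inner_toEuclideanLin_toEuclideanLin {n : Type*} [Fintype n] [DecidableEq n]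
    (A B : Matrix n n ℂ) (x y : EuclideanSpace ℂ n) :
    ⟪toEuclideanLin A x, toEuclideanLin B y⟫_ℂ = ⟪x, toEuclideanLin (Aᴴ * B) y⟫_ℂ := by
  rw [toLpLin_mul_same, LinearMap.comp_apply, toEuclideanLin_conjTranspose_eq_adjoint,
    LinearMap.adjoint_inner_right]

theorem Matrix.sum_inner_toEuclideanLin_comp_symm {ι n : Type*} [Fintype ι] [DecidableEq ι]
    [Fintype n] [DecidableEq n] {U : Matrix (ι × n) (ι × n) ℂ} (hU : Uᴴ * U = 1)
    (p q : ι) (x y : EuclideanSpace ℂ n) :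
    ∑ b, ⟪toEuclideanLin ((comp ι ι n n ℂ).symm U b p) x,
        toEuclideanLin ((comp ι ι n n ℂ).symm U b q) y⟫_ℂ =
      if p = q then ⟪x, y⟫_ℂ else 0 := by
  have h1 : (comp ι ι n n ℂ).symm 1 = 1 := (Equiv.symm_apply_eq _).mpr comp_one.symm
  simp only [inner_toEuclideanLin_toEuclideanLin, ← inner_sum, ← LinearMap.sum_apply, ← map_sum,
    ← comp_symm_conjTranspose_mul_apply, hU, h1, one_apply]
  split_ifs <;> simp

theorem Matrix.sum_smul_vecMulVec_mul_sum_smul_vecMulVec {ι n R : Type*} [Fintype ι] [DecidableEq ι]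
    [Fintype n] [CommSemiring R] [StarRing R] {a b e : ι → n → R}
    (hb : ∀ i j, star (b i) ⬝ᵥ b j = if i = j then 1 else 0) (c c' : ι → R) :
    (∑ t, c t • vecMulVec (a t) (star (b t))) * ∑ t, c' t • vecMulVec (b t) (star (e t)) =
      ∑ t, (c t * c' t) • vecMulVec (a t) (star (e t)) := by
  have key : ∀ t s, c t • vecMulVec (a t) (star (b t)) * c' s • vecMulVec (b s) (star (e s)) =
      if t = s then (c t * c' t) • vecMulVec (a t) (star (e t)) else 0 := fun t s => by
    rw [smul_mul_smul_comm, vecMulVec_mul_vecMulVec, hb]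
    split_ifs with h <;> simp [h]
  simp only [Finset.sum_mul_sum, key, Finset.sum_ite_eq, Finset.mem_univ, if_true]

theorem Matrix.eq_sum_kronecker_of_toEuclideanLin_comp_symm {ι κ n : Type*} [Fintype ι]
    [Fintype κ] [Fintype n] [DecidableEq n] {U : Matrix (ι × n) (ι × n) ℂ}
    (φ : κ → EuclideanSpace ℂ n) (ψ : OrthonormalBasis κ ℂ (EuclideanSpace ℂ n))
    (Uop : κ → Matrix ι ι ℂ)
    (h : ∀ p q l, toEuclideanLin ((comp ι ι n n ℂ).symm U p q) (ψ l) = Uop l p q • φ l) :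
    U = ∑ l, Uop l ⊗ₖ vecMulVec (ofLp (φ l)) (star (ofLp (ψ l))) := by
  have hblock : ∀ p q, (comp ι ι n n ℂ).symm U p q =
      ∑ l, Uop l p q • vecMulVec (ofLp (φ l)) (star (ofLp (ψ l))) := fun p q => by
    conv_lhs => rw [← mul_one ((comp ι ι n n ℂ).symm U p q), ← ψ.sum_vecMulVec_eq_one]
    simp only [Finset.mul_sum, mul_vecMulVec]
    refine Finset.sum_congr rfl fun l _ => ?_
    rw [← smul_vecMulVec, ← WithLp.ofLp_smul, ← h, ofLp_toLpLin, toLin'_apply]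
  ext ⟨p, m⟩ ⟨q, r⟩
  simpa [Matrix.sum_apply, kronecker_apply] using congrFun (congrFun (hblock p q) m) r

theorem Matrix.conjTranspose_mul_self_eq_one_of_sum_inner_smul {ι E : Type*} [Fintype ι]
    [DecidableEq ι] [NormedAddCommGroup E] [InnerProductSpace ℂ E] (A : Matrix ι ι ℂ) {e : E}
    (he : ‖e‖ = 1) (h : ∀ p q, ∑ b, ⟪A b p • e, A b q • e⟫_ℂ = if p = q then 1 else 0) :
    Aᴴ * A = 1 := by
  ext p q
  rw [one_apply, ← h, mul_apply]
  simp [inner_self_eq_norm_sq_to_K, he, mul_comm]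

theorem envSlice_conjTranspose {N d : ℕ} (M : Matrix (Fin N × Fin d) (Fin N × Fin d) ℂ)
    (f g : Fin N → ℂ) : envSlice Mᴴ f g = (envSlice M g f)ᴴ := by
  ext k l
  simp only [envSlice, conjTranspose_apply, of_apply, star_sum, star_mul', RCLike.star_def,
    Complex.conj_conj]
  rw [Finset.sum_comm]
  exact Finset.sum_congr rfl fun _ _ => Finset.sum_congr rfl fun _ _ => by ring

theorem envSlice_single_single {N d : ℕ} (M : Matrix (Fin N × Fin d) (Fin N × Fin d) ℂ)
    (p q : Fin N) :
    envSlice M (Pi.single p 1) (Pi.single q 1) = (comp _ _ _ _ ℂ).symm M p q := by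
  ext k l
  simp [envSlice, Pi.single_apply]

theorem envSlice_sum {N d : ℕ} {ι : Type*} [Fintype ι]
    (M : ι → Matrix (Fin N × Fin d) (Fin N × Fin d) ℂ) (f g : Fin N → ℂ) :
    envSlice (∑ t, M t) f g = ∑ t, envSlice (M t) f g := by
  ext k l
  simp only [envSlice, Matrix.sum_apply, of_apply, Finset.mul_sum]
  rw [Finset.sum_comm_cycle]

theorem envSlice_kronecker {N d : ℕ} (A : Matrix (Fin N) (Fin N) ℂ)
    (C : Matrix (Fin d) (Fin d) ℂ) (f g : Fin N → ℂ) :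
    envSlice (A ⊗ₖ C) f g = (star f ⬝ᵥ A *ᵥ g) • C := by
  ext k l
  simp only [envSlice, kronecker_apply, of_apply, Matrix.smul_apply, smul_eq_mul, dotProduct,
    mulVec, Finset.sum_mul, Finset.mul_sum, Pi.star_apply, RCLike.star_def]
  exact Finset.sum_congr rfl fun _ _ => Finset.sum_congr rfl fun _ _ => by ring

theorem envActAlg_commutative_of_eq_sum_kronecker {N d : ℕ} {φ ψ : Fin d → Fin d → ℂ}
    (Uop : Fin d → Matrix (Fin N) (Fin N) ℂ)
    (hφ : ∀ i j, star (φ i) ⬝ᵥ φ j = if i = j then 1 else 0)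
    (hψ : ∀ i j, star (ψ i) ⬝ᵥ ψ j = if i = j then 1 else 0)
    {U : Matrix (Fin N × Fin d) (Fin N × Fin d) ℂ}
    (hU : U = ∑ i, Uop i ⊗ₖ vecMulVec (φ i) (star (ψ i))) :
    ∀ a ∈ envActAlg U, ∀ b ∈ envActAlg U, a * b = b * a := by
  let D : Set (Matrix (Fin d) (Fin d) ℂ) :=
    Set.range fun μ : Fin d → ℂ => ∑ t, μ t • vecMulVec (ψ t) (star (ψ t))
  have hgen : {A | ∃ f₁ g₁ f₂ g₂, A = envSlice Uᴴ f₁ g₁ * envSlice U f₂ g₂} ⊆ D := by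
    rintro _ ⟨f₁, g₁, f₂, g₂, rfl⟩
    simp only [envSlice_conjTranspose, hU, envSlice_sum, envSlice_kronecker, conjTranspose_sum,
      conjTranspose_smul, conjTranspose_vecMulVec, star_star]
    exact ⟨_, (Matrix.sum_smul_vecMulVec_mul_sum_smul_vecMulVec hφ _ _).symm⟩
  have hD : ∀ x ∈ D, ∀ y ∈ D, x * y = y * x := by
    rintro _ ⟨μ, rfl⟩ _ ⟨ν, rfl⟩
    simp only [Matrix.sum_smul_vecMulVec_mul_sum_smul_vecMulVec hψ, mul_comm]
  have hD_star : ∀ x ∈ D, star x ∈ D := by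
    rintro _ ⟨μ, rfl⟩
    exact ⟨star μ, by simp [star_sum, star_eq_conjTranspose]⟩
  have : IsMulCommutative (envActAlg U) :=
    StarAlgebra.isMulCommutative_adjoin ℂ (fun x hx y hy => hD x (hgen hx) y (hgen hy))
      fun x hx y hy => hD x (hgen hx) _ (hD_star _ (hgen hy))
  exact fun a ha b hb => setLike_mul_comm ha hb

theorem conjTranspose_comp_symm_mul_comp_symm_mem_envActAlg {N d : ℕ}
    (U : Matrix (Fin N × Fin d) (Fin N × Fin d) ℂ) (p q p' q' : Fin N) :
    ((comp _ _ _ _ ℂ).symm U p q)ᴴ * (comp _ _ _ _ ℂ).symm U p' q' ∈ envActAlg U :=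
  StarAlgebra.subset_adjoin ℂ _ ⟨Pi.single q 1, Pi.single p 1, Pi.single p' 1, Pi.single q' 1,
    by rw [envSlice_conjTranspose, envSlice_single_single, envSlice_single_single]⟩

theorem exists_eq_sum_kronecker_of_envActAlg_commutative {N d : ℕ} (hN : 0 < N)
    {U : Matrix (Fin N × Fin d) (Fin N × Fin d) ℂ} (hU : Uᴴ * U = 1)
    (hcomm : ∀ a ∈ envActAlg U, ∀ b ∈ envActAlg U, a * b = b * a) :
    ∃ (φ ψ : OrthonormalBasis (Fin d) ℂ (EuclideanSpace ℂ (Fin d)))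
      (Uop : Fin d → Matrix (Fin N) (Fin N) ℂ),
      (∀ i, (Uop i)ᴴ * Uop i = 1) ∧
        U = ∑ i, Uop i ⊗ₖ vecMulVec (ofLp (φ i)) (star (ofLp (ψ i))) := by
  obtain ⟨ψ, hψ⟩ := (envActAlg U).exists_orthonormalBasis_forall_eigenvector hcomm
  let v : Fin d → Fin N × Fin N → EuclideanSpace ℂ (Fin d) := fun l pq =>
    toEuclideanLin ((comp _ _ _ _ ℂ).symm U pq.1 pq.2) (ψ l)
  have horth : ∀ k l, k ≠ l → ∀ pq pq', ⟪v k pq, v l pq'⟫_ℂ = 0 := fun k l hkl pq pq' => by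
    obtain ⟨μ, hμ⟩ := hψ _ (conjTranspose_comp_symm_mul_comp_symm_mem_envActAlg U _ _ _ _) l
    rw [inner_toEuclideanLin_toEuclideanLin, hμ, inner_smul_right, ψ.orthonormal.2 hkl, mul_zero]
  have hnorm : ∀ l p q, ∑ b, ⟪v l (b, p), v l (b, q)⟫_ℂ = if p = q then 1 else 0 :=
    fun l p q => by simp [v, sum_inner_toEuclideanLin_comp_symm hU]
  have hne : ∀ l, ∃ pq, v l pq ≠ 0 := fun l => by
    by_contra! h
    simpa [h] using hnorm l ⟨0, hN⟩ ⟨0, hN⟩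
  obtain ⟨φ, hφ⟩ := exists_orthonormalBasis_forall_eq_inner_smul v finrank_euclideanSpace horth hne
  let Uop : Fin d → Matrix (Fin N) (Fin N) ℂ := fun l => of fun p q => ⟪φ l, v l (p, q)⟫_ℂ
  refine ⟨φ, ψ, Uop, fun l => ?_, eq_sum_kronecker_of_toEuclideanLin_comp_symm φ ψ Uop
    fun p q l => hφ l (p, q)⟩
  refine conjTranspose_mul_self_eq_one_of_sum_inner_smul _ (φ.orthonormal.1 l) fun p q => ?_
  simpa only [Uop, of_apply, ← hφ] using hnorm l p q

theorem envActAlg_commutative_iff_general (N d : ℕ) (hN : 0 < N)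
    (U : Matrix (Fin N × Fin d) (Fin N × Fin d) ℂ)
    (hU : Uᴴ * U = 1) :
    (∀ a ∈ envActAlg U, ∀ b ∈ envActAlg U, a * b = b * a) ↔
    ∃ (φ ψ : Fin d → Fin d → ℂ) (Uop : Fin d → Matrix (Fin N) (Fin N) ℂ),
      (∀ i j, ∑ k, (starRingEnd ℂ) (φ i k) * φ j k = if i = j then 1 else 0) ∧
      (∀ i j, ∑ k, (starRingEnd ℂ) (ψ i k) * ψ j k = if i = j then 1 else 0) ∧
      (∀ i, (Uop i)ᴴ * Uop i = 1 ∧ Uop i * (Uop i)ᴴ = 1) ∧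
      U = ∑ i, Uop i ⊗ₖ Matrix.of (fun k l => φ i k * (starRingEnd ℂ) (ψ i l)) := by
  constructor
  · intro hcomm
    obtain ⟨φ, ψ, Uop, hUop, rfl⟩ := exists_eq_sum_kronecker_of_envActAlg_commutative hN hU hcomm
    exact ⟨fun i k => φ i k, fun i k => ψ i k, Uop, φ.sum_conj_mul_eq_ite, ψ.sum_conj_mul_eq_ite,
      fun i => ⟨hUop i, mul_eq_one_comm.mp (hUop i)⟩, rfl⟩
  · rintro ⟨φ, ψ, Uop, hφ, hψ, -, hUop⟩
    exact envActAlg_commutative_of_eq_sum_kronecker Uop hφ hψ hUop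

/-- `A_r(U)` is commutative iff `U = ∑ᵢ Uᵢ ⊗ |φᵢ⟩⟨ψᵢ|` for orthonormal bases
`(φᵢ)`, `(ψᵢ)` of `ℂ^d` and unitaries `Uᵢ` on the system. -/
theorem envActAlg_commutative_iff (N d : ℕ) (hN : 0 < N) (hd : 0 < d)
    (U : Matrix (Fin N × Fin d) (Fin N × Fin d) ℂ)
    (hU : Uᴴ * U = 1) (hU' : U * Uᴴ = 1) :
    (∀ a ∈ envActAlg U, ∀ b ∈ envActAlg U, a * b = b * a) ↔
    ∃ (φ ψ : Fin d → Fin d → ℂ) (Uop : Fin d → Matrix (Fin N) (Fin N) ℂ),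
      (∀ i j, ∑ k, (starRingEnd ℂ) (φ i k) * φ j k = if i = j then 1 else 0) ∧
      (∀ i j, ∑ k, (starRingEnd ℂ) (ψ i k) * ψ j k = if i = j then 1 else 0) ∧
      (∀ i, (Uop i)ᴴ * Uop i = 1 ∧ Uop i * (Uop i)ᴴ = 1) ∧
      U = ∑ i, Uop i ⊗ₖ Matrix.of (fun k l => φ i k * (starRingEnd ℂ) (ψ i l)) :=
  envActAlg_commutative_iff_general N d hN U hU
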